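/- arXiv:1504.01642 — 3 statements merged into one kernel-verified Lean document; each statement's English description precedes it below -/
import Mathlib

section
/- In ℝ¹ (the real line), if F is a finite family of closed intervals each of length at least 1, and among every 3 intervals in F some 2 intersect in a set of length at least 1, then there exist finitely many intervals K₁,...,K_c, each of length at least 1, with c bounded independently of |F|, such that every interval in F contains some K_i. In fact, for d=1 the classical (p,q) theorem yields this with intervals of length exactly 1. -/
open MeasureTheory Set
open scoped ENNReal

lemma vol_key {a b a' b' : ℝ}
    (h : (1 : ℝ≥0∞) ≤ volume (Icc a b ∩ Icc a' b')) :
    a' ≤ b - 1 ∧ a ≤ b' - 1 := by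
  rw [Set.Icc_inter_Icc, Real.volume_Icc, ENNReal.one_le_ofReal] at h
  constructor
  · have h1 : a' ≤ a ⊔ a' := le_sup_right
    have h2 : b ⊓ b' ≤ b := inf_le_left
    linarith
  · have h1 : a ≤ a ⊔ a' := le_sup_left
    have h2 : b ⊓ b' ≤ b' := inf_le_right
    linarith

/-- For `d = 1`, the volumetric `(p,q)` theorem with `p = 3`, `q = 2`:
there is a constant `c` (independent of the family) such that any finite family of
closed intervals of length at least one, in which among every three members some two
intersect in a set of length at least one, can be pierced by at most `c` unit-length
intervals. -/
theorem stmt_3 : ∃ c : ℕ, ∀ F : Finset (ℝ × ℝ),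
    (∀ I ∈ F, I.1 + 1 ≤ I.2) →
    (∀ I ∈ F, ∀ J ∈ F, ∀ L ∈ F, I ≠ J → J ≠ L → I ≠ L →
      (1 : ℝ≥0∞) ≤ volume (Icc I.1 I.2 ∩ Icc J.1 J.2) ∨
      (1 : ℝ≥0∞) ≤ volume (Icc J.1 J.2 ∩ Icc L.1 L.2) ∨
      (1 : ℝ≥0∞) ≤ volume (Icc I.1 I.2 ∩ Icc L.1 L.2)) →
    ∃ T : Finset ℝ, T.card ≤ c ∧
      ∀ I ∈ F, ∃ t ∈ T, Icc t (t + 1) ⊆ Icc I.1 I.2 := by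
  refine ⟨2, fun F hlen hF => ?_⟩
  rcases F.eq_empty_or_nonempty with rfl | hne
  · exact ⟨∅, by simp⟩
  -- r = minimum of the right endpoints minus 1
  obtain ⟨I₀, hI₀, hI₀min⟩ := F.exists_min_image (fun I => I.2 - 1) hne
  set r : ℝ := I₀.2 - 1 with hr
  set F2 : Finset (ℝ × ℝ) := F.filter (fun I => r < I.1) with hF2
  rcases F2.eq_empty_or_nonempty with hF2e | hF2ne
  · -- everyone is pierced by r
    refine ⟨{r}, by simp, fun I hI => ⟨r, by simp, ?_⟩⟩
    have h1 : ¬ r < I.1 := by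
      intro h
      have : I ∈ F2 := Finset.mem_filter.mpr ⟨hI, h⟩
      simp [hF2e] at this
    have h2 : r ≤ I.2 - 1 := hI₀min I hI
    intro x hx
    simp only [Set.mem_Icc] at hx ⊢
    constructor <;> push_neg at h1 <;> linarith [hx.1, hx.2]
  · obtain ⟨J₀, hJ₀, hJ₀max⟩ := F2.exists_max_image (fun I => I.1) hF2ne
    set s : ℝ := J₀.1 with hs
    refine ⟨{r, s}, by
      have := Finset.card_insert_le r ({s} : Finset ℝ); simpa using this,
      fun I hI => ?_⟩
    by_cases hcase : r < I.1
    · -- I ∈ F2, pierced by s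
      have hIF2 : I ∈ F2 := Finset.mem_filter.mpr ⟨hI, hcase⟩
      refine ⟨s, by simp, ?_⟩
      have hs1 : I.1 ≤ s := hJ₀max I hIF2
      have hs2 : s ≤ I.2 - 1 := by
        rcases eq_or_ne J₀ I with hJI | hJI
        · have := hlen I hI; rw [hs, hJI]; linarith
        · have hJ₀F : J₀ ∈ F := (Finset.mem_filter.mp hJ₀).1
          have hJ₀r : r < J₀.1 := (Finset.mem_filter.mp hJ₀).2
          have hlI : I.1 + 1 ≤ I.2 := hlen I hI
          have hlJ : J₀.1 + 1 ≤ J₀.2 := hlen J₀ hJ₀F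
          have hI₀I : I₀ ≠ I := by
            intro h; rw [h] at hr; rw [hr] at hcase; linarith
          have hI₀J : I₀ ≠ J₀ := by
            intro h; rw [h] at hr; rw [hr] at hJ₀r; linarith
          rcases hF I₀ hI₀ I hI J₀ hJ₀F hI₀I hJI.symm hI₀J with h | h | h
          · have := (vol_key h).1; exact absurd this (by simp only [hr] at hcase ⊢; linarith)
          · exact (vol_key h).1
          · have := (vol_key h).1; exact absurd this (by simp only [hr] at hJ₀r ⊢; linarith)
      intro x hx
      simp only [Set.mem_Icc] at hx ⊢
      constructor <;> linarith [hx.1, hx.2]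
    · -- pierced by r
      push_neg at hcase
      refine ⟨r, by simp, ?_⟩
      have h2 : r ≤ I.2 - 1 := hI₀min I hI
      intro x hx
      simp only [Set.mem_Icc] at hx ⊢
      constructor <;> linarith [hx.1, hx.2]
end

section
/- Let S be a set of k points in ℝ^d, and n = max{kd, d+1}. For any sets X₁,...,Xₙ ⊆ ℝ^d with S ⊆ conv(X_i) for all i, there is a choice of points x₁ ∈ X₁,...,xₙ ∈ Xₙ such that S ⊆ conv{x₁,...,xₙ}, in the special case k = 1 (the colorful Carathéodory theorem): if a point p lies in conv(X_i) for each of d+1 sets X₁,...,X_{d+1}, then there exist x_i ∈ X_i with p ∈ conv{x₁,...,x_{d+1}}. -/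
/-!
Among all transversals `x` of finite subsets `Yᵢ ⊆ Xᵢ` with `p ∈ conv Yᵢ`, take one whose hull
is closest to `p`, and suppose the distance is positive. The nearest point `q` of `conv (range x)`
lies in the face cut out by the supporting hyperplane orthogonal to `p - q`; by Carathéodory inside
that hyperplane, `q` is a convex combination of at most `d = dim E` of the `x i`, so some colour `i`
is not needed. Since `p ∈ conv Xᵢ`, some `y ∈ Xᵢ` lies on the far side of the parallel hyperplane
through `p`, and replacing `x i` by `y` brings the hull strictly closer to `p`.
-/

open Set Finset Metric Module

section LinearAlgebra

variable {𝕜 E : Type*} [Field 𝕜] [AddCommGroup E] [Module 𝕜 E]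

theorem AffineIndependent.card_le_finrank_of_forall_eq [FiniteDimensional 𝕜 E] {t : Finset E}
    (ht : AffineIndependent 𝕜 ((↑) : t → E)) {l : E →ₗ[𝕜] 𝕜} (hl : l ≠ 0) {c : 𝕜}
    (htl : ∀ y ∈ t, l y = c) : #t ≤ finrank 𝕜 E := by
  have hspan : vectorSpan 𝕜 (Set.range ((↑) : t → E)) ≤ LinearMap.ker l := by
    rw [vectorSpan_def, Submodule.span_le]
    rintro _ ⟨_, ⟨⟨y, hy⟩, rfl⟩, _, ⟨⟨z, hz⟩, rfl⟩, rfl⟩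
    simp [htl y hy, htl z hz]
  have hker : finrank 𝕜 (LinearMap.ker l) < finrank 𝕜 E :=
    Submodule.finrank_lt (mt LinearMap.ker_eq_top.1 hl)
  have := ht.card_le_finrank_succ
  rw [Fintype.card_coe] at this
  have := Submodule.finrank_mono hspan
  omega

theorem mem_convexHull_inter_of_forall_le [LinearOrder 𝕜] [IsStrictOrderedRing 𝕜] {s : Set E}
    {q : E} (l : E →ₗ[𝕜] 𝕜) (hs : ∀ y ∈ s, l y ≤ l q) (hq : q ∈ convexHull 𝕜 s) :
    q ∈ convexHull 𝕜 (s ∩ {y | l y = l q}) := by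
  obtain ⟨ι, _, z, w, hzs, -, hw, hw1, rfl⟩ := eq_pos_convex_span_of_mem_convexHull hq
  have hgap : ∑ i, w i * (l (∑ j, w j • z j) - l (z i)) = 0 := by
    simp only [mul_sub, Finset.sum_sub_distrib, ← Finset.sum_mul, hw1, one_mul, map_sum,
      map_smul, smul_eq_mul, sub_self]
  have hface : ∀ i, l (z i) = l (∑ j, w j • z j) := fun i => by
    have hnonneg : ∀ j ∈ Finset.univ, 0 ≤ w j * (l (∑ j, w j • z j) - l (z j)) :=
      fun j _ => mul_nonneg (hw j).le (sub_nonneg.2 (hs _ (hzs ⟨j, rfl⟩)))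
    have := (Finset.sum_eq_zero_iff_of_nonneg hnonneg).1 hgap i (Finset.mem_univ i)
    linarith [(mul_eq_zero.1 this).resolve_left (hw i).ne']
  exact (convex_convexHull 𝕜 _).sum_mem (fun i _ => (hw i).le) hw1
    fun i _ => subset_convexHull 𝕜 _ ⟨hzs ⟨i, rfl⟩, hface i⟩

end LinearAlgebra

theorem Finset.exists_subset_image_compl_singleton {κ β : Type*} [Fintype κ] {x : κ → β}
    {t : Finset β} (ht : (t : Set β) ⊆ Set.range x) (hcard : #t < Fintype.card κ) :
    ∃ i, (t : Set β) ⊆ x '' {i}ᶜ := by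
  classical
  have : Nonempty κ := Fintype.card_pos_iff.1 (by omega)
  obtain ⟨i, -, hi⟩ := Finset.exists_mem_notMem_of_card_lt_card
    (s := t.image (Function.invFun x)) (t := Finset.univ) (Finset.card_image_le.trans_lt hcard)
  refine ⟨i, fun a ha => ⟨Function.invFun x a, ?_, Function.invFun_eq (ht ha)⟩⟩
  rintro rfl
  exact hi (Finset.mem_image_of_mem _ ha)

section InnerProductSpace

variable {E : Type*} [NormedAddCommGroup E] [InnerProductSpace ℝ E]

theorem infDist_eq_dist_iff_forall_inner_le_zero {K : Set E} (hK : Convex ℝ K) {p q : E}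
    (hq : q ∈ K) : infDist p K = dist p q ↔ ∀ z ∈ K, inner ℝ (p - q) (z - q) ≤ 0 := by
  rw [infDist_eq_iInf, dist_eq_norm, eq_comm]
  simp_rw [dist_eq_norm]
  exact norm_eq_iInf_iff_real_inner_le_zero hK hq

variable [FiniteDimensional ℝ E]

theorem exists_mem_convexHull_image_compl_singleton_of_infDist_eq {κ : Type*} [Fintype κ]
    (hκ : finrank ℝ E < Fintype.card κ) {x : κ → E} {p q : E}
    (hq : q ∈ convexHull ℝ (Set.range x)) (hpq : p ≠ q)
    (hnear : infDist p (convexHull ℝ (Set.range x)) = dist p q) :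
    ∃ i, q ∈ convexHull ℝ (x '' {i}ᶜ) := by
  set l : E →ₗ[ℝ] ℝ := innerₗ E (p - q)
  have hl : l ≠ 0 := fun h => by
    have : l (p - q) = 0 := by rw [h]; rfl
    simp only [l, innerₗ_apply_apply, inner_self_eq_zero, sub_eq_zero] at this
    exact hpq this
  have hle : ∀ y ∈ Set.range x, l y ≤ l q := by
    rintro _ ⟨i, rfl⟩
    have := (infDist_eq_dist_iff_forall_inner_le_zero (convex_convexHull ℝ _) hq).1 hnear
      (x i) (subset_convexHull ℝ _ ⟨i, rfl⟩)
    simpa only [l, innerₗ_apply_apply, inner_sub_right, sub_nonpos] using this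
  have hface := mem_convexHull_inter_of_forall_le l hle hq
  rw [convexHull_eq_union] at hface
  simp only [Set.mem_iUnion] at hface
  obtain ⟨t, hts, htind, hqt⟩ := hface
  have hcard := htind.card_le_finrank_of_forall_eq hl fun y hy => (hts hy).2
  obtain ⟨i, hi⟩ := Finset.exists_subset_image_compl_singleton
    (hts.trans inter_subset_left) (hcard.trans_lt hκ)
  exact ⟨i, convexHull_mono hi hqt⟩

theorem exists_update_infDist_convexHull_lt {κ : Type*} [Fintype κ] [DecidableEq κ]
    (hκ : finrank ℝ E < Fintype.card κ) {X : κ → Set E} {p : E}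
    (hp : ∀ i, p ∈ convexHull ℝ (X i)) {x : κ → E} (hpx : p ∉ convexHull ℝ (Set.range x)) :
    ∃ i, ∃ y ∈ X i, infDist p (convexHull ℝ (Set.range (Function.update x i y))) <
      infDist p (convexHull ℝ (Set.range x)) := by
  have : Nonempty κ := Fintype.card_pos_iff.1 (by omega)
  obtain ⟨q, hqK, hnear⟩ :=
    ((Set.finite_range x).isCompact_convexHull (𝕜 := ℝ)).exists_infDist_eq_dist
      (convexHull_nonempty_iff.2 (Set.range_nonempty x)) p
  have hpq : p ≠ q := fun h => hpx (h ▸ hqK)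
  obtain ⟨i, hi⟩ := exists_mem_convexHull_image_compl_singleton_of_infDist_eq hκ hqK hpq hnear
  obtain ⟨y, hy, hpy⟩ := ((innerₗ E (p - q)).convexOn convex_univ).exists_ge_of_mem_convexHull
    (subset_univ _) (hp i)
  refine ⟨i, y, hy, ?_⟩
  have hqK' : q ∈ convexHull ℝ (Set.range (Function.update x i y)) := by
    refine convexHull_mono ?_ hi
    rintro _ ⟨j, hj, rfl⟩
    exact ⟨j, Function.update_of_ne hj _ _⟩
  have hyK' : y ∈ convexHull ℝ (Set.range (Function.update x i y)) :=
    subset_convexHull ℝ _ ⟨i, Function.update_self _ _ _⟩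
  -- `y` lies beyond the hyperplane through `p` orthogonal to `p - q`
  have hfar : 0 < inner ℝ (p - q) (y - q) := by
    have hpy' : 0 ≤ inner ℝ (p - q) (y - p) := by
      rw [inner_sub_right]
      exact sub_nonneg.2 hpy
    rw [← sub_add_sub_cancel y p q, inner_add_right, real_inner_self_eq_norm_sq]
    exact add_pos_of_nonneg_of_pos hpy' (pow_pos (norm_pos_iff.2 (sub_ne_zero.2 hpq)) 2)
  rw [hnear]
  refine (infDist_le_dist_of_mem hqK').lt_of_ne fun h => hfar.not_ge ?_
  exact (infDist_eq_dist_iff_forall_inner_le_zero (convex_convexHull ℝ _) hqK').1 h y hyK'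

theorem colorful_caratheodory_of_finite {κ : Type*} [Fintype κ]
    (hκ : finrank ℝ E < Fintype.card κ) {X : κ → Set E} (hX : ∀ i, (X i).Finite) {p : E}
    (hp : ∀ i, p ∈ convexHull ℝ (X i)) :
    ∃ x : κ → E, (∀ i, x i ∈ X i) ∧ p ∈ convexHull ℝ (Set.range x) := by
  classical
  have hne : (Set.pi univ X).Nonempty :=
    univ_pi_nonempty_iff.2 fun i => convexHull_nonempty_iff.1 ⟨p, hp i⟩
  obtain ⟨x, hx, hmin⟩ := Set.exists_min_image _
    (fun x => infDist p (convexHull ℝ (Set.range x))) (Set.Finite.pi hX) hne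
  refine ⟨x, fun i => hx i (mem_univ i), by_contra fun hpx => ?_⟩
  obtain ⟨i, y, hy, hlt⟩ := exists_update_infDist_convexHull_lt hκ hp hpx
  exact (hmin _ ((update_mem_pi_iff_of_mem hx).2 fun _ => hy)).not_gt hlt

theorem colorful_caratheodory {κ : Type*} [Fintype κ]
    (hκ : finrank ℝ E < Fintype.card κ) {X : κ → Set E} {p : E}
    (hp : ∀ i, p ∈ convexHull ℝ (X i)) :
    ∃ x : κ → E, (∀ i, x i ∈ X i) ∧ p ∈ convexHull ℝ (Set.range x) := by
  have hfin : ∀ i, ∃ Y : Finset E, ↑Y ⊆ X i ∧ p ∈ convexHull ℝ (Y : Set E) := fun i => by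
    have := hp i
    rw [convexHull_eq_union_convexHull_finite_subsets] at this
    simpa only [Set.mem_iUnion, exists_prop] using this
  choose Y hYX hpY using hfin
  obtain ⟨x, hxY, hpx⟩ := colorful_caratheodory_of_finite hκ (fun i => (Y i).finite_toSet) hpY
  exact ⟨x, fun i => hYX i (hxY i), hpx⟩

end InnerProductSpace

/-- Bárány's colorful Carathéodory theorem: if `p ∈ conv(Xᵢ)` for each of `d+1` sets
`X₁, …, X_{d+1}` in `ℝ^d`, then there are `xᵢ ∈ Xᵢ` with `p ∈ conv{x₁, …, x_{d+1}}`. -/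
theorem stmt_17 (d : ℕ) (X : Fin (d + 1) → Set (EuclideanSpace ℝ (Fin d)))
    (p : EuclideanSpace ℝ (Fin d)) (hp : ∀ i, p ∈ convexHull ℝ (X i)) :
    ∃ x : Fin (d + 1) → EuclideanSpace ℝ (Fin d),
      (∀ i, x i ∈ X i) ∧ p ∈ convexHull ℝ (Set.range x) :=
  colorful_caratheodory (by simp) hp
end

section
/- Let F₁,...,F_h be finite nonempty families of closed intervals in ℝ (color classes), with h = 2. Suppose every colorful pair (I₁ ∈ F₁, I₂ ∈ F₂) satisfies length(I₁ ∩ I₂) ≥ 1. Then there is a color class F_i such that length(∩F_i) ≥ 1. -/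
open MeasureTheory Set
open scoped ENNReal

/-- One-dimensional sharp colorful quantitative Helly theorem for length, with two color
classes: if every colorful pair of closed intervals intersects in length at least one, then
one of the two classes has intersection of length at least one. -/
theorem stmt_18 (F₁ F₂ : Finset (ℝ × ℝ)) (h₁ : F₁.Nonempty) (h₂ : F₂.Nonempty)
    (hcol : ∀ I ∈ F₁, ∀ J ∈ F₂,
      (1 : ℝ≥0∞) ≤ volume (Icc I.1 I.2 ∩ Icc J.1 J.2)) :
    (1 : ℝ≥0∞) ≤ volume (⋂ I ∈ F₁, Icc I.1 I.2) ∨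
    (1 : ℝ≥0∞) ≤ volume (⋂ I ∈ F₂, Icc I.1 I.2) := by
  by_contra hcon
  push_neg at hcon
  obtain ⟨hv1, hv2⟩ := hcon
  have key : ∀ I ∈ F₁, ∀ J ∈ F₂, max I.1 J.1 + 1 ≤ min I.2 J.2 := by
    intro I hI J hJ
    have h := hcol I hI J hJ
    rw [Icc_inter_Icc, Real.volume_Icc] at h
    have h' : (1:ℝ) ≤ min I.2 J.2 - max I.1 J.1 := by
      rwa [ENNReal.one_le_ofReal] at h
    linarith
  obtain ⟨I₀, hI₀, hI₀m⟩ := F₁.exists_max_image Prod.fst h₁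
  obtain ⟨I₁, hI₁, hI₁m⟩ := F₁.exists_min_image Prod.snd h₁
  obtain ⟨J₀, hJ₀, hJ₀m⟩ := F₂.exists_max_image Prod.fst h₂
  obtain ⟨J₁, hJ₁, hJ₁m⟩ := F₂.exists_min_image Prod.snd h₂
  have hsub1 : Icc I₀.1 I₁.2 ⊆ ⋂ I ∈ F₁, Icc I.1 I.2 := by
    intro x hx
    simp only [mem_iInter]
    exact fun I hI => ⟨le_trans (hI₀m I hI) hx.1, le_trans hx.2 (hI₁m I hI)⟩
  have hsub2 : Icc J₀.1 J₁.2 ⊆ ⋂ J ∈ F₂, Icc J.1 J.2 := by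
    intro x hx
    simp only [mem_iInter]
    exact fun J hJ => ⟨le_trans (hJ₀m J hJ) hx.1, le_trans hx.2 (hJ₁m J hJ)⟩
  have hb1 : I₁.2 < I₀.1 + 1 := by
    have := lt_of_le_of_lt (measure_mono hsub1) hv1
    rw [Real.volume_Icc] at this
    have h' : I₁.2 - I₀.1 < 1 := by
      by_contra hc
      push_neg at hc
      exact absurd (ENNReal.one_le_ofReal.mpr hc) (not_le.mpr this)
    linarith
  have hb2 : J₁.2 < J₀.1 + 1 := by
    have := lt_of_le_of_lt (measure_mono hsub2) hv2
    rw [Real.volume_Icc] at this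
    have h' : J₁.2 - J₀.1 < 1 := by
      by_contra hc
      push_neg at hc
      exact absurd (ENNReal.one_le_ofReal.mpr hc) (not_le.mpr this)
    linarith
  have k1 := key I₀ hI₀ J₁ hJ₁
  have k2 := key I₁ hI₁ J₀ hJ₀
  have := le_max_left I₀.1 J₁.1
  have := min_le_right I₀.2 J₁.2
  have := le_max_right I₁.1 J₀.1
  have := min_le_left I₁.2 J₀.2
  linarith
end
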